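/- Let T > 0, let h : ℝ → ℝ be Lipschitz continuous, α : [0,T] → ℝ continuous, y₀ ∈ ℝ and c ≥ 0. Let S̄ : [0,T] → ℝ be càdlàg, and let g : ℝ × ℝ → ℝ be continuous such that for every compact set K ⊂ ℝ there is L_K ≥ 0 with |g(x,y) − g(x,z)| ≤ L_K·|y − z| for all x, y, z ∈ K. Let p, q : [0,T] → ℝ be continuous and nondecreasing, set Θ := p − q (a continuous function of bounded variation), let μ_p and μ_q be the associated Lebesgue–Stieltjes measures, and let Y := Y^Θ. For each n ∈ ℕ let 0 = tⁿ₀ < tⁿ₁ < ⋯ < tⁿ_{mₙ} = T be a partition with max_{1≤k≤mₙ} (tⁿ_k − tⁿ_{k−1}) → 0 as n → ∞, define the càdlàg step function Θⁿ(t) := Θ(0) + Σ_{k=1}^{mₙ} (Θ(tⁿ_k) − Θ(tⁿ_{k−1}))·1_{[tⁿ_k, T]}(t), let Yⁿ := Y^{Θⁿ} (same y₀), and choose reals ξⁿ_k ∈ [min(aⁿ_k, bⁿ_k), max(aⁿ_k, bⁿ_k)] where aⁿ_k := g(S̄(tⁿ_k), Yⁿ(tⁿ_k−)) and bⁿ_k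 := g(S̄(tⁿ_k), Yⁿ(tⁿ_k−) + c·(Θ(tⁿ_k) − Θ(tⁿ_{k−1}))). Then sup_{t∈[0,T]} | Σ_{k : tⁿ_k ≤ t} ξⁿ_k·(Θ(tⁿ_k) − Θ(tⁿ_{k−1})) − ( ∫_{(0,t]} g(S̄(u), Y(u)) dμ_p(u) − ∫_{(0,t]} g(S̄(u), Y(u)) dμ_q(u) ) | → 0 as n → ∞. -/

import Mathlib

open Filter Set MeasureTheory Topology

noncomputable section

/-- A function `x : ℝ → ℝ` is càdlàg on `[0,T]`. -/
def Cadlag (T : ℝ) (x : ℝ → ℝ) : Prop :=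
  (∀ t ∈ Set.Ico (0:ℝ) T, Filter.Tendsto x (nhdsWithin t (Set.Ici t)) (nhds (x t))) ∧
  (∀ t ∈ Set.Ioc (0:ℝ) T, ∃ L : ℝ, Filter.Tendsto x (nhdsWithin t (Set.Iio t)) (nhds L))

/-- `Y` is the market impact process on `[0,T]` driven by the càdlàg strategy `Θ`. -/
def ImpactSol (T : ℝ) (h α : ℝ → ℝ) (y₀ : ℝ) (Θ Y : ℝ → ℝ) : Prop :=
  Cadlag T Y ∧ ∀ t ∈ Set.Icc (0:ℝ) T,
    Y t = y₀ + (Θ t - Θ 0) - ∫ s in (0:ℝ)..t, h (Y s) * α s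

/-- The left limit `x(t−)` of a càdlàg path, with the convention `x(0−) := x(0)`. -/
def leftVal (x : ℝ → ℝ) (t : ℝ) : ℝ := if t ≤ 0 then x 0 else Function.leftLim x t

open scoped ENNReal

/-!
The simple strategies `Θⁿ` converge to `Θ` uniformly, so by Grönwall's inequality the impact
processes `Yⁿ` converge to `Y` uniformly on `[0,T]`; since `Yⁿ` jumps by exactly the block trade
`ΔΘ` at each node, its left limits at the nodes approach `Y` as well. An execution price `ξⁿ_k`
lies between two values of the continuous `g` at arguments tending to `(S̄(s), Y(s))`, using the
right-continuity of `S̄`; so the step function equal to `ξⁿ_{k+1}` on `(tⁿ_k, tⁿ_{k+1}]` converges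
boundedly to `g(S̄, Y)` on `(0,T]`, hence in `L¹(μ_p)` and `L¹(μ_q)`. Up to time `u`, the proceeds
are the integral of this step function up to the last node before `u`; the remaining piece of the
integral is bounded by `sup |g(S̄, Y)|` times the oscillation of `p` (resp. `q`) over one cell.
-/

theorem measurable_of_continuousWithinAt_Ici {β : Type*} [TopologicalSpace β]
    [TopologicalSpace.PseudoMetrizableSpace β] [MeasurableSpace β] [BorelSpace β] {f : ℝ → β}
    (hf : ∀ x, ContinuousWithinAt f (Ici x) x) : Measurable f := by
  -- approximate from the right by points of `ℤ / (n + 1)`; the approximants factor through `ℤ`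
  refine measurable_of_tendsto_metrizable
    (f := fun (n : ℕ) x => f (⌈x * ((n : ℝ) + 1)⌉ / ((n : ℝ) + 1)))
    (fun n => (measurable_from_top (f := fun k : ℤ => f (k / ((n : ℝ) + 1)))).comp
      (Int.measurable_ceil.comp (measurable_id.mul_const _))) (tendsto_pi_nhds.2 fun x => ?_)
  have hn : ∀ n : ℕ, (0 : ℝ) < n + 1 := fun n => Nat.cast_add_one_pos n
  have hle : ∀ n : ℕ, x ≤ ⌈x * ((n : ℝ) + 1)⌉ / ((n : ℝ) + 1) := fun n => by
    rw [le_div_iff₀ (hn n)]; exact Int.le_ceil _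
  have hge : ∀ n : ℕ, (⌈x * ((n : ℝ) + 1)⌉ : ℝ) / ((n : ℝ) + 1) ≤ x + 1 / ((n : ℝ) + 1) :=
    fun n => by
      rw [div_le_iff₀ (hn n), add_mul, one_div_mul_cancel (hn n).ne']
      exact (Int.ceil_lt_add_one _).le
  have hlim : Tendsto (fun n : ℕ => x + 1 / ((n : ℝ) + 1)) atTop (𝓝 x) := by
    simpa using (tendsto_const_nhds (x := x)).add (tendsto_one_div_add_atTop_nhds_zero_nat (𝕜 := ℝ))
  exact (hf x).tendsto.comp (tendsto_nhdsWithin_iff.2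
    ⟨tendsto_of_tendsto_of_tendsto_of_le_of_le tendsto_const_nhds hlim hle hge,
      Eventually.of_forall hle⟩)

theorem integrableOn_of_abs_le {α : Type*} [MeasurableSpace α] {μ : Measure α} {f : α → ℝ}
    {s : Set α} {M : ℝ} (hs : MeasurableSet s) (hμs : μ s ≠ ∞)
    (hf : AEStronglyMeasurable f (μ.restrict s)) (hM : ∀ x ∈ s, |f x| ≤ M) :
    IntegrableOn f s μ :=
  ⟨hf, .restrict_of_bounded (C := M) hμs.lt_top (ae_restrict_of_forall_mem hs hM)⟩

theorem tendsto_setIntegral_abs_sub {α : Type*} [MeasurableSpace α] {μ : Measure α} {s : Set α}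
    (hs : MeasurableSet s) (hμs : μ s ≠ ∞) {F : ℕ → α → ℝ} {f : α → ℝ} {M : ℝ}
    (hF : ∀ n, AEStronglyMeasurable (F n) (μ.restrict s))
    (hf : AEStronglyMeasurable f (μ.restrict s)) (hFM : ∀ᶠ n in atTop, ∀ x ∈ s, |F n x| ≤ M)
    (hfM : ∀ x ∈ s, |f x| ≤ M) (hlim : ∀ x ∈ s, Tendsto (F · x) atTop (𝓝 (f x))) :
    Tendsto (fun n => ∫ x in s, |F n x - f x| ∂μ) atTop (𝓝 0) := by
  have : IsFiniteMeasure (μ.restrict s) := isFiniteMeasure_restrict.2 hμs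
  simpa only [integral_zero] using tendsto_integral_filter_of_dominated_convergence
    (F := fun n x => |F n x - f x|) (f := fun _ => 0) (fun _ => M + M)
    (Eventually.of_forall fun n => continuous_abs.comp_aestronglyMeasurable ((hF n).sub hf))
    (hFM.mono fun n hn => ae_restrict_of_forall_mem hs fun x hx => by
      rw [Real.norm_eq_abs, abs_abs]
      exact (abs_sub _ _).trans (add_le_add (hn x hx) (hfM x hx)))
    (integrable_const _)
    (ae_restrict_of_forall_mem hs fun x hx => by
      simpa using ((hlim x hx).sub_const (f x)).abs)

namespace Cadlag

variable {T : ℝ} {x : ℝ → ℝ}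

theorem continuousWithinAt_Ici_comp_clamp (hT : 0 < T) (hx : Cadlag T x) (s : ℝ) :
    ContinuousWithinAt (fun r => x (max 0 (min r T))) (Ici s) s := by
  rcases lt_or_ge s T with hsT | hTs
  · have hρ : Continuous fun r : ℝ => max 0 (min r T) := by fun_prop
    exact ContinuousWithinAt.comp (g := x)
      (hx.1 _ ⟨le_max_left _ _, max_lt hT ((min_le_left _ _).trans_lt hsT)⟩)
      hρ.continuousWithinAt fun r hr => max_le_max le_rfl (min_le_min_right T hr)
  · refine ContinuousWithinAt.congr (f := fun _ => x T) continuousWithinAt_const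
      (fun r hr => ?_) ?_
    · simp only [min_eq_right (hTs.trans hr), max_eq_right hT.le]
    · simp only [min_eq_right hTs, max_eq_right hT.le]

theorem aestronglyMeasurable (hT : 0 < T) (hx : Cadlag T x) (μ : Measure ℝ) :
    AEStronglyMeasurable x (μ.restrict (Icc 0 T)) :=
  (measurable_of_continuousWithinAt_Ici (hx.continuousWithinAt_Ici_comp_clamp hT)
    ).aestronglyMeasurable.congr <| ae_restrict_of_forall_mem measurableSet_Icc fun s hs => by
      simp only [min_eq_left hs.2, max_eq_right hs.1]

theorem exists_bound (hx : Cadlag T x) : ∃ M, ∀ s ∈ Icc 0 T, |x s| ≤ M := by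
  refine isCompact_Icc.induction_on (p := fun A => ∃ M, ∀ s ∈ A, |x s| ≤ M) ⟨0, by simp⟩
    (fun A B hAB ⟨M, hM⟩ => ⟨M, fun s hs => hM s (hAB hs)⟩)
    (fun A B ⟨M, hM⟩ ⟨M', hM'⟩ => ⟨max M M', fun s hs => hs.elim
      (fun h => (hM s h).trans (le_max_left _ _)) (fun h => (hM' s h).trans (le_max_right _ _))⟩)
    fun s hs => ?_
  suffices ∃ M, ∀ᶠ r in 𝓝[Icc 0 T] s, |x r| ≤ M by
    obtain ⟨M, hM⟩ := this
    exact ⟨_, hM, M, fun r hr => hr⟩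
  -- bound `x` separately on the left of `s` (left limit) and on the right (right-continuity)
  obtain ⟨M₁, h₁⟩ : ∃ M, ∀ᶠ r in 𝓝[Icc 0 T ∩ Iio s] s, |x r| ≤ M := by
    rcases hs.1.eq_or_lt with rfl | hs0
    · refine ⟨0, ?_⟩
      rw [show Icc 0 T ∩ Iio 0 = ∅ by ext; simp +contextual, nhdsWithin_empty]
      exact eventually_bot
    · obtain ⟨L, hL⟩ := hx.2 s ⟨hs0, hs.2⟩
      exact ⟨|L| + 1, (hL.abs.eventually_le_const (lt_add_one _)).filter_mono
        (nhdsWithin_mono _ inter_subset_right)⟩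
  obtain ⟨M₂, h₂⟩ : ∃ M, ∀ᶠ r in 𝓝[Icc 0 T ∩ Ici s] s, |x r| ≤ M := by
    rcases hs.2.eq_or_lt with rfl | hsT
    · exact ⟨|x s|, eventually_nhdsWithin_of_forall fun r hr => by
        rw [le_antisymm hr.1.2 hr.2]⟩
    · exact ⟨|x s| + 1, ((hx.1 s ⟨hs.1, hsT⟩).abs.eventually_le_const
        (lt_add_one _)).filter_mono (nhdsWithin_mono _ inter_subset_right)⟩
  refine ⟨max M₁ M₂, ?_⟩
  rw [← inter_univ (Icc 0 T), ← Iio_union_Ici (a := s), inter_union_distrib_left,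
    nhdsWithin_union, eventually_sup]
  exact ⟨h₁.mono fun r hr => hr.trans (le_max_left _ _),
    h₂.mono fun r hr => hr.trans (le_max_right _ _)⟩

end Cadlag

namespace ImpactSol

variable {T : ℝ} {h α : ℝ → ℝ} {y₀ : ℝ} {Θ Y : ℝ → ℝ}

theorem integrableOn (hT : 0 < T) (hh : Continuous h) (hα : ContinuousOn α (Icc 0 T))
    (hY : ImpactSol T h α y₀ Θ Y) : IntegrableOn (fun s => h (Y s) * α s) (Icc 0 T) := by
  obtain ⟨M, hM⟩ := hY.1.exists_bound
  obtain ⟨C, hC⟩ := (isCompact_Icc (a := -M) (b := M)).exists_bound_of_continuousOn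
    hh.continuousOn
  obtain ⟨A, hA⟩ := isCompact_Icc.exists_bound_of_continuousOn hα
  refine integrableOn_of_abs_le measurableSet_Icc measure_Icc_lt_top.ne
    ((hh.comp_aestronglyMeasurable (hY.1.aestronglyMeasurable hT _)).mul
      (hα.aestronglyMeasurable measurableSet_Icc)) (M := C * A) fun s hs => ?_
  rw [abs_mul, ← Real.norm_eq_abs, ← Real.norm_eq_abs]
  exact mul_le_mul (hC _ (abs_le.1 (hM s hs))) (hA s hs) (norm_nonneg _)
    ((norm_nonneg _).trans (hC _ (abs_le.1 (hM s hs))))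

theorem continuousOn_integral (hT : 0 < T) (hh : Continuous h) (hα : ContinuousOn α (Icc 0 T))
    (hY : ImpactSol T h α y₀ Θ Y) :
    ContinuousOn (fun t => ∫ s in (0 : ℝ)..t, h (Y s) * α s) (Icc 0 T) := by
  have := hY.integrableOn hT hh hα
  rw [← uIcc_of_le hT.le] at this ⊢
  exact intervalIntegral.continuousOn_primitive_interval this

theorem continuousOn (hT : 0 < T) (hh : Continuous h) (hα : ContinuousOn α (Icc 0 T))
    (hΘ : ContinuousOn Θ (Icc 0 T)) (hY : ImpactSol T h α y₀ Θ Y) : ContinuousOn Y (Icc 0 T) :=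
  ((continuousOn_const.add (hΘ.sub continuousOn_const)).sub
    (hY.continuousOn_integral hT hh hα)).congr hY.2

theorem leftVal_eq (hh : Continuous h) (hα : ContinuousOn α (Icc 0 T))
    (hY : ImpactSol T h α y₀ Θ Y) {t L : ℝ} (ht : t ∈ Ioc 0 T) (hΘ : Tendsto Θ (𝓝[<] t) (𝓝 L)) :
    leftVal Y t = Y t - (Θ t - L) := by
  have hT : 0 < T := ht.1.trans_le ht.2
  have hI := (hY.continuousOn_integral hT hh hα t (Ioc_subset_Icc_self ht)).tendsto.mono_left
    (nhdsWithin_mono t (s := Ioo 0 t) fun s hs => ⟨hs.1.le, hs.2.le.trans ht.2⟩)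
  rw [nhdsWithin_Ioo_eq_nhdsLT ht.1] at hI
  have hlim : Tendsto Y (𝓝[<] t) (𝓝 (y₀ + (L - Θ 0) - ∫ s in (0 : ℝ)..t, h (Y s) * α s)) := by
    refine ((tendsto_const_nhds.add (hΘ.sub tendsto_const_nhds)).sub hI).congr' ?_
    filter_upwards [Ioo_mem_nhdsLT ht.1] with s hs
    exact (hY.2 s ⟨hs.1.le, hs.2.le.trans ht.2⟩).symm
  rw [leftVal, if_neg (not_le.2 ht.1), leftLim_eq_of_tendsto hlim, hY.2 t (Ioc_subset_Icc_self ht)]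
  ring

theorem hasDerivWithinAt_integral (hT : 0 < T) (hh : Continuous h)
    (hα : ContinuousOn α (Icc 0 T)) (hY : ImpactSol T h α y₀ Θ Y) {s : ℝ} (hs : s ∈ Ico 0 T) :
    HasDerivWithinAt (fun t => ∫ r in (0 : ℝ)..t, h (Y r) * α r) (h (Y s) * α s) (Ici s) s := by
  have hmem : Icc 0 T ∈ 𝓝[Ici s] s := Icc_mem_nhdsGE_of_mem hs
  have hint := hY.integrableOn hT hh hα
  refine intervalIntegral.integral_hasDerivWithinAt_right
    ((intervalIntegrable_iff_integrableOn_Icc_of_le hs.1).2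
      (hint.mono_set (Icc_subset_Icc_right hs.2.le)))
    ⟨Icc 0 T, nhdsWithin_mono _ Ioi_subset_Ici_self hmem, hint.aestronglyMeasurable⟩
    (ContinuousWithinAt.mono ?_ Ioi_subset_Ici_self)
  exact (hh.continuousAt.comp_continuousWithinAt (hY.1.1 s hs)).mul
    ((hα s (Ico_subset_Icc_self hs)).mono_of_mem_nhdsWithin hmem)

theorem abs_sub_le {Lh : NNReal} {A γ : ℝ} {Θ₁ Θ₂ Y₁ Y₂ : ℝ → ℝ} (hT : 0 < T)
    (hh : LipschitzWith Lh h) (hα : ContinuousOn α (Icc 0 T)) (hA : ∀ s ∈ Icc 0 T, |α s| ≤ A)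
    (hY₁ : ImpactSol T h α y₀ Θ₁ Y₁) (hY₂ : ImpactSol T h α y₀ Θ₂ Y₂)
    (hΘ : ∀ s ∈ Icc 0 T, |(Θ₁ s - Θ₁ 0) - (Θ₂ s - Θ₂ 0)| ≤ γ) :
    ∀ s ∈ Icc 0 T, |Y₁ s - Y₂ s| ≤ γ * Real.exp ((Lh * A + 1) * s) := by
  set K : ℝ := Lh * A + 1
  -- unlike `Y₁ - Y₂`, `Z` is continuous and has right derivatives
  set Z : ℝ → ℝ := fun s =>
    (∫ r in (0 : ℝ)..s, h (Y₂ r) * α r) - ∫ r in (0 : ℝ)..s, h (Y₁ r) * α r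
  have hZ : ∀ s ∈ Icc 0 T, Z s = (Y₁ s - Y₂ s) - ((Θ₁ s - Θ₁ 0) - (Θ₂ s - Θ₂ 0)) := by
    intro s hs
    rw [hY₁.2 s hs, hY₂.2 s hs]
    ring
  have hZc : ContinuousOn Z (Icc 0 T) :=
    (hY₂.continuousOn_integral hT hh.continuous hα).sub
      (hY₁.continuousOn_integral hT hh.continuous hα)
  have hZ' : ∀ s ∈ Ico 0 T,
      HasDerivWithinAt Z (h (Y₂ s) * α s - h (Y₁ s) * α s) (Ici s) s := fun s hs =>
    (hY₂.hasDerivWithinAt_integral hT hh.continuous hα hs).sub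
      (hY₁.hasDerivWithinAt_integral hT hh.continuous hα hs)
  have hA0 : 0 ≤ A := (abs_nonneg _).trans (hA 0 ⟨le_rfl, hT.le⟩)
  have hbound : ∀ s ∈ Ico 0 T,
      ‖h (Y₂ s) * α s - h (Y₁ s) * α s‖ ≤ K * ‖Z s‖ + K * γ := by
    intro s hs
    have hs' := Ico_subset_Icc_self hs
    rw [Real.norm_eq_abs, Real.norm_eq_abs, ← sub_mul, abs_mul]
    calc |h (Y₂ s) - h (Y₁ s)| * |α s| ≤ (Lh * |Y₁ s - Y₂ s|) * A := by
          refine mul_le_mul ?_ (hA s hs') (abs_nonneg _) (by positivity)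
          simpa [Real.dist_eq, abs_sub_comm] using hh.dist_le_mul (Y₂ s) (Y₁ s)
      _ ≤ (Lh * A) * (|Z s| + γ) := by
          rw [mul_right_comm, hZ s hs']
          refine mul_le_mul_of_nonneg_left ?_ (by positivity)
          linarith [hΘ s hs',
            abs_sub_abs_le_abs_sub (Y₁ s - Y₂ s) ((Θ₁ s - Θ₁ 0) - (Θ₂ s - Θ₂ 0))]
      _ ≤ K * |Z s| + K * γ := by
          have hγ : 0 ≤ γ := (abs_nonneg _).trans (hΘ 0 ⟨le_rfl, hT.le⟩)
          rw [← mul_add]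
          exact mul_le_mul_of_nonneg_right (le_add_of_nonneg_right zero_le_one) (by positivity)
  intro s hs
  have hK : K ≠ 0 := by positivity
  have hG := norm_le_gronwallBound_of_norm_deriv_right_le (δ := 0) hZc hZ' (by simp [Z])
    hbound s hs
  rw [gronwallBound_of_K_ne_0 hK, Real.norm_eq_abs, hZ s hs] at hG
  simp only [sub_zero, zero_mul, zero_add, mul_div_cancel_left₀ _ hK] at hG
  linarith [hΘ s hs, abs_sub_abs_le_abs_sub (Y₁ s - Y₂ s) ((Θ₁ s - Θ₁ 0) - (Θ₂ s - Θ₂ 0))]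

end ImpactSol

def sampledPath (t : ℕ → ℝ) (m : ℕ) (Θ : ℝ → ℝ) (s : ℝ) : ℝ :=
  Θ (t 0) + ∑ k ∈ Finset.range m, (Θ (t (k + 1)) - Θ (t k)) * if t (k + 1) ≤ s then 1 else 0

def partitionStep (t : ℕ → ℝ) (m : ℕ) (c : ℕ → ℝ) (s : ℝ) : ℝ :=
  ∑ k ∈ Finset.range m, (Ioc (t k) (t (k + 1))).indicator (fun _ => c k) s

theorem measurable_partitionStep (t : ℕ → ℝ) (m : ℕ) (c : ℕ → ℝ) :
    Measurable (partitionStep t m c) :=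
  Finset.measurable_sum _ fun _ _ => measurable_const.indicator measurableSet_Ioc

theorem integrableOn_partitionStep {μ : Measure ℝ} {s : Set ℝ} (hs : μ s ≠ ∞) (t : ℕ → ℝ)
    (m : ℕ) (c : ℕ → ℝ) : IntegrableOn (partitionStep t m c) s μ :=
  integrable_finsetSum _ fun _ _ => (integrableOn_const hs).indicator measurableSet_Ioc

structure IsPartition (t : ℕ → ℝ) (m : ℕ) (a b : ℝ) : Prop where
  zero : t 0 = a
  last : t m = b
  lt_succ : ∀ k < m, t k < t (k + 1)

namespace IsPartition

variable {t : ℕ → ℝ} {m : ℕ} {a b : ℝ}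

theorem le_of_le (hP : IsPartition t m a b) {i j : ℕ} (hij : i ≤ j) (hj : j ≤ m) : t i ≤ t j :=
  (strictMonoOn_Iic_of_lt_succ (ψ := t) fun k hk => by
    simpa only [Order.succ_eq_add_one] using hP.lt_succ k hk).monotoneOn
    (hij.trans hj : i ≤ m) hj hij

theorem mem_Icc (hP : IsPartition t m a b) {k : ℕ} (hk : k ≤ m) : t k ∈ Icc a b :=
  ⟨hP.zero ▸ hP.le_of_le (Nat.zero_le k) hk, hP.last ▸ hP.le_of_le hk le_rfl⟩

theorem exists_index (hP : IsPartition t m a b) {s : ℝ} (hs : a ≤ s) :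
    ∃ j ≤ m, t j ≤ s ∧ (j < m → s < t (j + 1)) :=
  ⟨Nat.findGreatest (fun i => t i ≤ s) m, Nat.findGreatest_le m,
    Nat.findGreatest_spec (P := fun i => t i ≤ s) (Nat.zero_le m) (hP.zero ▸ hs),
    fun hj => not_le.1 (Nat.findGreatest_is_greatest (Nat.lt_succ_self _) hj)⟩

theorem exists_mem_Ioc (hP : IsPartition t m a b) {s : ℝ} (hs : s ∈ Ioc a b) :
    ∃ k < m, s ∈ Ioc (t k) (t (k + 1)) := by
  set k := Nat.findGreatest (fun i => t i < s) m
  have hk : t k < s := Nat.findGreatest_spec (P := fun i => t i < s) (Nat.zero_le m)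
    (hP.zero ▸ hs.1)
  have hkm : k < m := (Nat.findGreatest_le m).lt_of_ne fun h => by
    have : t m < s := h ▸ hk
    exact (hP.last ▸ this).not_ge hs.2
  exact ⟨k, hkm, hk, not_lt.1 (Nat.findGreatest_is_greatest (Nat.lt_succ_self _) hkm)⟩

theorem eq_of_mem_Ioc (hP : IsPartition t m a b) {k k' : ℕ} {s : ℝ} (hk : k < m) (hk' : k' < m)
    (hs : s ∈ Ioc (t k) (t (k + 1))) (hs' : s ∈ Ioc (t k') (t (k' + 1))) : k = k' := by
  by_contra hne
  rcases lt_or_gt_of_ne hne with h | h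
  · linarith [hs.2, hs'.1, hP.le_of_le h hk'.le]
  · linarith [hs.1, hs'.2, hP.le_of_le h hk.le]

theorem sum_ite_le {β : Type*} [AddCommMonoid β] (hP : IsPartition t m a b) {j : ℕ} {s : ℝ}
    (hj : j ≤ m) (hjs : t j ≤ s) (hsj : j < m → s < t (j + 1)) (c : ℕ → β) :
    ∑ k ∈ Finset.range m, (if t (k + 1) ≤ s then c k else 0) = ∑ k ∈ Finset.range j, c k := by
  rw [← Finset.sum_filter]
  congr 1
  ext k
  simp only [Finset.mem_filter, Finset.mem_range]
  refine ⟨fun ⟨hk, hks⟩ => not_le.1 fun hjk => ?_, fun hk => ⟨hk.trans_le hj,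
    (hP.le_of_le hk hj).trans hjs⟩⟩
  linarith [hsj (hjk.trans_lt hk), hP.le_of_le (Nat.succ_le_succ hjk) hk]

theorem sampledPath_eq (hP : IsPartition t m a b) (Θ : ℝ → ℝ) {j : ℕ} {s : ℝ} (hj : j ≤ m)
    (hjs : t j ≤ s) (hsj : j < m → s < t (j + 1)) : sampledPath t m Θ s = Θ (t j) := by
  simp only [sampledPath, mul_ite, mul_one, mul_zero]
  rw [hP.sum_ite_le hj hjs hsj, Finset.sum_range_sub (fun k => Θ (t k))]
  ring

theorem sampledPath_apply (hP : IsPartition t m a b) (Θ : ℝ → ℝ) {j : ℕ} (hj : j ≤ m) :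
    sampledPath t m Θ (t j) = Θ (t j) :=
  hP.sampledPath_eq Θ hj le_rfl fun hjm => hP.lt_succ j hjm

theorem tendsto_sampledPath_nhdsLT (hP : IsPartition t m a b) (Θ : ℝ → ℝ) {k : ℕ} (hk : k < m) :
    Tendsto (sampledPath t m Θ) (𝓝[<] t (k + 1)) (𝓝 (Θ (t k))) :=
  tendsto_const_nhds.congr' <| by
    filter_upwards [Ioo_mem_nhdsLT (hP.lt_succ k hk)] with s hs
    exact (hP.sampledPath_eq Θ hk.le hs.1.le fun _ => hs.2).symm

theorem abs_sampledPath_sub_le (hP : IsPartition t m a b) {Θ : ℝ → ℝ} {η : ℝ} (hη : 0 ≤ η)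
    (hΘ : ∀ k < m, ∀ s ∈ Icc (t k) (t (k + 1)), |Θ s - Θ (t k)| ≤ η) {s : ℝ} (hs : s ∈ Icc a b) :
    |sampledPath t m Θ s - Θ s| ≤ η := by
  obtain ⟨j, hj, hjs, hsj⟩ := hP.exists_index hs.1
  rw [hP.sampledPath_eq Θ hj hjs hsj, abs_sub_comm]
  rcases hj.lt_or_eq with hjm | rfl
  · exact hΘ j hjm s ⟨hjs, (hsj hjm).le⟩
  · rw [le_antisymm (hP.last ▸ hs.2) hjs, sub_self, abs_zero]
    exact hη

theorem partitionStep_eq (hP : IsPartition t m a b) (c : ℕ → ℝ) {k : ℕ} {s : ℝ} (hk : k < m)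
    (hs : s ∈ Ioc (t k) (t (k + 1))) : partitionStep t m c s = c k := by
  rw [partitionStep, Finset.sum_eq_single_of_mem k (Finset.mem_range.2 hk)]
  · exact indicator_of_mem hs _
  · exact fun i hi hik => indicator_of_notMem
      (fun hs' => hik (hP.eq_of_mem_Ioc (Finset.mem_range.1 hi) hk hs' hs)) _

theorem setIntegral_partitionStep (hP : IsPartition t m a b) (μ : Measure ℝ)
    [IsFiniteMeasureOnCompacts μ] (c : ℕ → ℝ) {j : ℕ} (hj : j ≤ m) :
    ∫ s in Ioc a (t j), partitionStep t m c s ∂μ =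
      ∑ k ∈ Finset.range j, c k * μ.real (Ioc (t k) (t (k + 1))) := by
  induction j with
  | zero => simp [hP.zero]
  | succ j ih =>
    have hjm : j < m := hj
    rw [Finset.sum_range_succ, ← ih hjm.le, ← Ioc_union_Ioc_eq_Ioc (hP.mem_Icc hjm.le).1
      (hP.lt_succ j hjm).le, setIntegral_union (Ioc_disjoint_Ioc_of_le le_rfl) measurableSet_Ioc
      (integrableOn_partitionStep measure_Ioc_lt_top.ne t m c)
      (integrableOn_partitionStep measure_Ioc_lt_top.ne t m c),
      setIntegral_congr_fun measurableSet_Ioc fun s hs => hP.partitionStep_eq c hjm hs,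
      setIntegral_const, smul_eq_mul, mul_comm]

theorem abs_sum_sub_setIntegral_le (hP : IsPartition t m a b) (μ : Measure ℝ)
    [IsFiniteMeasureOnCompacts μ] (c : ℕ → ℝ) {f : ℝ → ℝ} {M δ : ℝ}
    (hf : AEStronglyMeasurable f (μ.restrict (Ioc a b))) (hfM : ∀ s ∈ Ioc a b, |f s| ≤ M)
    (hM : 0 ≤ M) (hδ : 0 ≤ δ) (hμ : ∀ k < m, μ.real (Ioc (t k) (t (k + 1))) ≤ δ) {u : ℝ}
    (hu : u ∈ Icc a b) :
    |∑ k ∈ Finset.range m,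
        (if t (k + 1) ≤ u then c k * μ.real (Ioc (t k) (t (k + 1))) else 0) -
      ∫ s in Ioc a u, f s ∂μ| ≤
      (∫ s in Ioc a b, |partitionStep t m c s - f s| ∂μ) + M * δ := by
  obtain ⟨j, hj, hju, huj⟩ := hP.exists_index hu.1
  have htj := hP.mem_Icc hj
  have hfi : IntegrableOn f (Ioc a b) μ :=
    integrableOn_of_abs_le measurableSet_Ioc measure_Ioc_lt_top.ne hf hfM
  have hdi : IntegrableOn (fun s => partitionStep t m c s - f s) (Ioc a b) μ :=
    (integrableOn_partitionStep measure_Ioc_lt_top.ne t m c).sub hfi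
  -- the Riemann sum is the integral of the step function up to the last node `t j ≤ u`
  rw [hP.sum_ite_le hj hju huj, ← hP.setIntegral_partitionStep μ c hj,
    ← Ioc_union_Ioc_eq_Ioc htj.1 hju, setIntegral_union (Ioc_disjoint_Ioc_of_le le_rfl)
      measurableSet_Ioc (hfi.mono_set (Ioc_subset_Ioc_right htj.2))
      (hfi.mono_set (Ioc_subset_Ioc_left htj.1 |>.trans (Ioc_subset_Ioc_right hu.2))),
    ← sub_sub, ← integral_sub (integrableOn_partitionStep measure_Ioc_lt_top.ne t m c)
      (hfi.mono_set (Ioc_subset_Ioc_right htj.2))]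
  have hmain : |∫ s in Ioc a (t j), (partitionStep t m c s - f s) ∂μ| ≤
      ∫ s in Ioc a b, |partitionStep t m c s - f s| ∂μ :=
    (abs_integral_le_integral_abs).trans <| setIntegral_mono_set hdi.abs
      (Eventually.of_forall fun _ => abs_nonneg _)
      (Eventually.of_forall (Ioc_subset_Ioc_right htj.2))
  have hrest : |∫ s in Ioc (t j) u, f s ∂μ| ≤ M * δ := by
    have hμju : μ.real (Ioc (t j) u) ≤ δ := by
      rcases hj.lt_or_eq with hjm | rfl
      · exact (measureReal_mono (Ioc_subset_Ioc_right (huj hjm).le)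
          measure_Ioc_lt_top.ne).trans (hμ j hjm)
      · rw [Ioc_eq_empty (not_lt.2 (hP.last ▸ hu.2)), measureReal_empty]
        exact hδ
    rw [← Real.norm_eq_abs]
    refine (norm_setIntegral_le_of_norm_le_const measure_Ioc_lt_top fun s hs => ?_).trans
      (mul_le_mul_of_nonneg_left hμju hM)
    exact hfM s ⟨htj.1.trans_lt hs.1, hs.2.trans hu.2⟩
  exact (abs_sub _ _).trans (add_le_add hmain hrest)

end IsPartition

def MeshTendstoZero (t : ℕ → ℕ → ℝ) (m : ℕ → ℕ) : Prop :=
  ∀ ε > (0 : ℝ), ∃ N : ℕ, ∀ n ≥ N, ∀ k < m n, t n (k + 1) - t n k ≤ ε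

section Mesh

variable {t : ℕ → ℕ → ℝ} {m : ℕ → ℕ} {a b : ℝ}

theorem MeshTendstoZero.eventually_abs_sub_le (hmesh : MeshTendstoZero t m)
    (hP : ∀ n, IsPartition (t n) (m n) a b) {φ : ℝ → ℝ}
    (hφ : ContinuousOn φ (Icc a b)) {η : ℝ} (hη : 0 < η) :
    ∀ᶠ n in atTop, ∀ k < m n, ∀ s ∈ Icc (t n k) (t n (k + 1)), |φ s - φ (t n k)| ≤ η := by
  obtain ⟨δ, hδ, hφδ⟩ := Metric.uniformContinuousOn_iff_le.1
    (isCompact_Icc.uniformContinuousOn_of_continuous hφ) η hη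
  obtain ⟨N, hN⟩ := hmesh δ hδ
  refine eventually_atTop.2 ⟨N, fun n hn k hk s hs => ?_⟩
  have htk := (hP n).mem_Icc hk.le
  have htk' := (hP n).mem_Icc hk
  rw [← Real.dist_eq]
  refine hφδ s ⟨htk.1.trans hs.1, hs.2.trans htk'.2⟩ _ htk ?_
  rw [Real.dist_eq, abs_of_nonneg (sub_nonneg.2 hs.1)]
  linarith [hs.2, hN n hn k hk]

theorem MeshTendstoZero.eventually_abs_mul_sub_le (hmesh : MeshTendstoZero t m)
    (hP : ∀ n, IsPartition (t n) (m n) a b) {φ : ℝ → ℝ}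
    (hφ : ContinuousOn φ (Icc a b)) (c : ℝ) :
    ∀ η > 0, ∀ᶠ n in atTop, ∀ k < m n, |c * (φ (t n (k + 1)) - φ (t n k))| ≤ η := by
  intro η hη
  filter_upwards [hmesh.eventually_abs_sub_le hP hφ (η := η / (|c| + 1)) (by positivity)]
    with n hn k hk
  rw [abs_mul]
  calc |c| * |φ (t n (k + 1)) - φ (t n k)| ≤ |c| * (η / (|c| + 1)) :=
        mul_le_mul_of_nonneg_left (hn k hk _ ⟨((hP n).lt_succ k hk).le, le_rfl⟩) (abs_nonneg c)
    _ ≤ η := by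
        rw [mul_div_assoc', div_le_iff₀ (by positivity)]
        nlinarith [abs_nonneg c]

theorem tendsto_zero_of_eventually_abs_le {e : ℕ → ℕ → ℝ}
    (he : ∀ η > 0, ∀ᶠ n in atTop, ∀ k < m n, |e n k| ≤ η) {κ : ℕ → ℕ} (hκ : ∀ n, κ n < m n) :
    Tendsto (fun n => e n (κ n)) atTop (𝓝 0) :=
  Metric.tendsto_nhds.2 fun η hη => (he (η / 2) (half_pos hη)).mono fun n hn => by
    rw [Real.dist_eq, sub_zero]
    exact (hn (κ n) (hκ n)).trans_lt (half_lt_self hη)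

theorem MeshTendstoZero.tendsto_nhdsGE (hmesh : MeshTendstoZero t m) {κ : ℕ → ℕ}
    (hκ : ∀ n, κ n < m n) {s : ℝ}
    (hs : ∀ n, s ∈ Ioc (t n (κ n)) (t n (κ n + 1))) :
    Tendsto (fun n => t n (κ n + 1)) atTop (𝓝[≥] s) := by
  refine tendsto_nhdsWithin_iff.2 ⟨Metric.tendsto_atTop.2 fun ε hε => ?_,
    Eventually.of_forall fun n => (hs n).2⟩
  obtain ⟨N, hN⟩ := hmesh (ε / 2) (half_pos hε)
  refine ⟨N, fun n hn => ?_⟩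
  rw [Real.dist_eq, abs_of_nonneg (sub_nonneg.2 (hs n).2)]
  linarith [hN n hn (κ n) (hκ n), (hs n).1]

theorem eventually_abs_riemannStieltjesSum_sub_le (hP : ∀ n, IsPartition (t n) (m n) a b)
    (hmesh : MeshTendstoZero t m)
    (p : StieltjesFunction ℝ) (hp : ContinuousOn p (Icc a b)) {c : ℕ → ℕ → ℝ} {f : ℝ → ℝ}
    {M : ℝ} (hM : 0 ≤ M) (hf : AEStronglyMeasurable f (p.measure.restrict (Ioc a b)))
    (hfM : ∀ s ∈ Ioc a b, |f s| ≤ M) (hcM : ∀ᶠ n in atTop, ∀ k < m n, |c n k| ≤ M)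
    (hlim : ∀ s ∈ Ioc a b,
      Tendsto (fun n => partitionStep (t n) (m n) (c n) s) atTop (𝓝 (f s)))
    {ε : ℝ} (hε : 0 < ε) :
    ∀ᶠ n in atTop, ∀ u ∈ Icc a b,
      |∑ k ∈ Finset.range (m n),
          (if t n (k + 1) ≤ u then c n k * (p (t n (k + 1)) - p (t n k)) else 0) -
        ∫ s in Ioc a u, f s ∂p.measure| ≤ ε := by
  have hstep : ∀ᶠ n in atTop, ∀ s ∈ Ioc a b, |partitionStep (t n) (m n) (c n) s| ≤ M :=
    hcM.mono fun n hn s hs => by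
      obtain ⟨k, hk, hsk⟩ := (hP n).exists_mem_Ioc hs
      rw [(hP n).partitionStep_eq (c n) hk hsk]
      exact hn k hk
  have hint := tendsto_setIntegral_abs_sub measurableSet_Ioc measure_Ioc_lt_top.ne
    (fun n => (measurable_partitionStep _ _ _).aestronglyMeasurable) hf hstep hfM hlim
  set δ := ε / (2 * (M + 1))
  have hδ : 0 < δ := by positivity
  filter_upwards [hint.eventually (ge_mem_nhds (half_pos hε)),
    hmesh.eventually_abs_sub_le hP hp hδ] with n hn hpn u hu
  have hμ : ∀ k < m n, p.measure.real (Ioc (t n k) (t n (k + 1))) = p (t n (k + 1)) - p (t n k) :=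
    fun k hk => by
      rw [measureReal_def, StieltjesFunction.measure_Ioc,
        ENNReal.toReal_ofReal (sub_nonneg.2 (p.mono ((hP n).lt_succ k hk).le))]
  have hsum := (hP n).abs_sum_sub_setIntegral_le p.measure (c n) hf hfM hM hδ.le
    (fun k hk => (hμ k hk).trans_le ((le_abs_self _).trans
      (hpn k hk _ ⟨((hP n).lt_succ k hk).le, le_rfl⟩))) hu
  rw [Finset.sum_congr rfl fun k hk => by rw [hμ k (Finset.mem_range.1 hk)]] at hsum
  have hMδ : M * δ ≤ ε / 2 := by
    rw [mul_div_assoc', div_le_div_iff₀ (by positivity) two_pos]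
    nlinarith
  linarith

theorem eventually_abs_riemannStieltjesSum_sub_sub_le (hP : ∀ n, IsPartition (t n) (m n) a b)
    (hmesh : MeshTendstoZero t m)
    (p q : StieltjesFunction ℝ) (hp : ContinuousOn p (Icc a b)) (hq : ContinuousOn q (Icc a b))
    {Θ : ℝ → ℝ} (hΘ : ∀ s, Θ s = p s - q s) {c : ℕ → ℕ → ℝ} {f : ℝ → ℝ} {M : ℝ} (hM : 0 ≤ M)
    (hfp : AEStronglyMeasurable f (p.measure.restrict (Ioc a b)))
    (hfq : AEStronglyMeasurable f (q.measure.restrict (Ioc a b)))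
    (hfM : ∀ s ∈ Ioc a b, |f s| ≤ M) (hcM : ∀ᶠ n in atTop, ∀ k < m n, |c n k| ≤ M)
    (hlim : ∀ s ∈ Ioc a b,
      Tendsto (fun n => partitionStep (t n) (m n) (c n) s) atTop (𝓝 (f s)))
    {ε : ℝ} (hε : 0 < ε) :
    ∀ᶠ n in atTop, ∀ u ∈ Icc a b,
      |∑ k ∈ Finset.range (m n),
          (if t n (k + 1) ≤ u then c n k * (Θ (t n (k + 1)) - Θ (t n k)) else 0) -
        ((∫ s in Ioc a u, f s ∂p.measure) - ∫ s in Ioc a u, f s ∂q.measure)| ≤ ε := by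
  filter_upwards [eventually_abs_riemannStieltjesSum_sub_le hP hmesh p hp hM hfp hfM hcM hlim
    (half_pos hε), eventually_abs_riemannStieltjesSum_sub_le hP hmesh q hq hM hfq hfM hcM hlim
    (half_pos hε)] with n hpn hqn u hu
  have hsplit : ∑ k ∈ Finset.range (m n),
      (if t n (k + 1) ≤ u then c n k * (Θ (t n (k + 1)) - Θ (t n k)) else 0) =
      (∑ k ∈ Finset.range (m n),
        (if t n (k + 1) ≤ u then c n k * (p (t n (k + 1)) - p (t n k)) else 0)) -
      ∑ k ∈ Finset.range (m n),
        (if t n (k + 1) ≤ u then c n k * (q (t n (k + 1)) - q (t n k)) else 0) := by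
    rw [← Finset.sum_sub_distrib]
    refine Finset.sum_congr rfl fun k _ => ?_
    split_ifs
    · rw [hΘ, hΘ]
      ring
    · rw [sub_zero]
  have hp' := hpn u hu
  have hq' := hqn u hu
  rw [hsplit]
  rw [abs_le] at hp' hq' ⊢
  constructor <;> linarith

end Mesh

section Prices

variable {t : ℕ → ℕ → ℝ} {m : ℕ → ℕ} {T : ℝ} {g : ℝ → ℝ → ℝ} {S Y : ℝ → ℝ}
  {y d ξ : ℕ → ℕ → ℝ}

theorem tendsto_partitionStep_of_mem_uIcc (hP : ∀ n, IsPartition (t n) (m n) 0 T)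
    (hmesh : MeshTendstoZero t m) (hg : Continuous fun p : ℝ × ℝ => g p.1 p.2)
    (hS : Cadlag T S) (hY : ContinuousOn Y (Icc 0 T))
    (hy : ∀ η > 0, ∀ᶠ n in atTop, ∀ k < m n, |y n k - Y (t n (k + 1))| ≤ η)
    (hd : ∀ η > 0, ∀ᶠ n in atTop, ∀ k < m n, |d n k| ≤ η)
    (hξ : ∀ n, ∀ k < m n, ξ n k ∈
      uIcc (g (S (t n (k + 1))) (y n k)) (g (S (t n (k + 1))) (y n k + d n k)))
    {s : ℝ} (hs : s ∈ Ioc 0 T) :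
    Tendsto (fun n => partitionStep (t n) (m n) (ξ n) s) atTop (𝓝 (g (S s) (Y s))) := by
  have hT : 0 < T := hs.1.trans_le hs.2
  choose κ hκ hsκ using fun n => (hP n).exists_mem_Ioc hs
  set τ : ℕ → ℝ := fun n => t n (κ n + 1)
  have hτT : ∀ n, τ n ∈ Icc 0 T := fun n => (hP n).mem_Icc (hκ n)
  have hτ : Tendsto τ atTop (𝓝[≥] s) := hmesh.tendsto_nhdsGE hκ hsκ
  have hSτ : Tendsto (fun n => S (τ n)) atTop (𝓝 (S s)) := by
    have := ((hS.continuousWithinAt_Ici_comp_clamp hT s).tendsto.comp hτ)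
    simp only [Function.comp_def, min_eq_left hs.2, max_eq_right hs.1.le] at this
    refine this.congr fun n => ?_
    simp only [min_eq_left (hτT n).2, max_eq_right (hτT n).1]
  have hYτ : Tendsto (fun n => Y (τ n)) atTop (𝓝 (Y s)) :=
    (hY s (Ioc_subset_Icc_self hs)).tendsto.comp
      (tendsto_nhdsWithin_iff.2 ⟨hτ.mono_right nhdsWithin_le_nhds, Eventually.of_forall hτT⟩)
  have hyτ : Tendsto (fun n => y n (κ n)) atTop (𝓝 (Y s)) := by
    have := (tendsto_zero_of_eventually_abs_le
      (e := fun n k => y n k - Y (t n (k + 1))) hy hκ).add hYτ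
    rw [zero_add] at this
    exact this.congr fun n => sub_add_cancel _ _
  have hzτ : Tendsto (fun n => y n (κ n) + d n (κ n)) atTop (𝓝 (Y s)) := by
    simpa using hyτ.add (tendsto_zero_of_eventually_abs_le hd hκ)
  have hgτ : ∀ {z : ℕ → ℝ}, Tendsto z atTop (𝓝 (Y s)) →
      Tendsto (fun n => g (S (τ n)) (z n)) atTop (𝓝 (g (S s) (Y s))) := fun hz =>
    (hg.tendsto (S s, Y s)).comp (hSτ.prodMk_nhds hz)
  have hlo := (hgτ hyτ).min (hgτ hzτ)
  have hhi := (hgτ hyτ).max (hgτ hzτ)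
  rw [min_self] at hlo
  rw [max_self] at hhi
  refine (tendsto_of_tendsto_of_tendsto_of_le_of_le hlo hhi (fun n => (hξ n _ (hκ n)).1)
    fun n => (hξ n _ (hκ n)).2).congr fun n => ?_
  exact ((hP n).partitionStep_eq (ξ n) (hκ n) (hsκ n)).symm

theorem exists_bound_of_mem_uIcc (hP : ∀ n, IsPartition (t n) (m n) 0 T)
    (hg : Continuous fun p : ℝ × ℝ => g p.1 p.2)
    (hS : Cadlag T S) (hY : ContinuousOn Y (Icc 0 T))
    (hy : ∀ η > 0, ∀ᶠ n in atTop, ∀ k < m n, |y n k - Y (t n (k + 1))| ≤ η)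
    (hd : ∀ η > 0, ∀ᶠ n in atTop, ∀ k < m n, |d n k| ≤ η)
    (hξ : ∀ n, ∀ k < m n, ξ n k ∈
      uIcc (g (S (t n (k + 1))) (y n k)) (g (S (t n (k + 1))) (y n k + d n k))) :
    ∃ M, 0 ≤ M ∧ (∀ s ∈ Icc 0 T, |g (S s) (Y s)| ≤ M) ∧
      ∀ᶠ n in atTop, ∀ k < m n, |ξ n k| ≤ M := by
  obtain ⟨MS, hMS⟩ := hS.exists_bound
  obtain ⟨MY, hMY⟩ := isCompact_Icc.exists_bound_of_continuousOn hY
  set R := |MS| + |MY| + 2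
  obtain ⟨M, hM⟩ := (isCompact_Icc.prod isCompact_Icc : IsCompact (Icc (-R) R ×ˢ Icc (-R) R))
    |>.exists_bound_of_continuousOn hg.continuousOn
  have hgM : ∀ x z, |x| ≤ R → |z| ≤ R → |g x z| ≤ M := fun x z hx hz =>
    hM (x, z) ⟨abs_le.1 hx, abs_le.1 hz⟩
  have hSR : ∀ s ∈ Icc 0 T, |S s| ≤ R := fun s hs => by
    linarith [hMS s hs, le_abs_self MS, abs_nonneg MY]
  have hYR : ∀ s ∈ Icc 0 T, |Y s| + 2 ≤ R := fun s hs => by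
    have := hMY s hs
    rw [Real.norm_eq_abs] at this
    linarith [le_abs_self MY, abs_nonneg MS]
  refine ⟨M, (abs_nonneg _).trans (hgM 0 0 (by simp; positivity) (by simp; positivity)),
    fun s hs => hgM _ _ (hSR s hs) (by linarith [hYR s hs]), ?_⟩
  filter_upwards [hy 1 one_pos, hd 1 one_pos] with n hyn hdn k hk
  have ht : t n (k + 1) ∈ Icc 0 T := (hP n).mem_Icc hk
  have hyR : |y n k| ≤ R - 1 := by
    linarith [hYR _ ht, hyn k hk, abs_sub_abs_le_abs_sub (y n k) (Y (t n (k + 1)))]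
  have ha := hgM (S (t n (k + 1))) (y n k) (hSR _ ht) (by linarith)
  have hb := hgM (S (t n (k + 1))) (y n k + d n k) (hSR _ ht)
    ((abs_add_le _ _).trans (by linarith [hdn k hk]))
  rcases mem_uIcc.1 (hξ n k hk) with ⟨h₁, h₂⟩ | ⟨h₁, h₂⟩ <;>
  · rw [abs_le] at ha hb ⊢
    constructor <;> linarith

end Prices

namespace ImpactSol

variable {t : ℕ → ℕ → ℝ} {m : ℕ → ℕ} {T : ℝ} {h α : ℝ → ℝ} {y₀ : ℝ} {Θ Y : ℝ → ℝ}
  {Yn : ℕ → ℝ → ℝ}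

theorem tendstoUniformlyOn_of_sampledPath {Lh : NNReal} (hT : 0 < T) (hh : LipschitzWith Lh h)
    (hα : ContinuousOn α (Icc 0 T)) (hΘ : ContinuousOn Θ (Icc 0 T))
    (hP : ∀ n, IsPartition (t n) (m n) 0 T) (hmesh : MeshTendstoZero t m)
    (hY : ImpactSol T h α y₀ Θ Y)
    (hYn : ∀ n, ImpactSol T h α y₀ (sampledPath (t n) (m n) Θ) (Yn n)) :
    TendstoUniformlyOn Yn Y atTop (Icc 0 T) := by
  obtain ⟨A, hA⟩ := isCompact_Icc.exists_bound_of_continuousOn hα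
  simp only [Real.norm_eq_abs] at hA
  have hA0 : 0 ≤ A := (abs_nonneg _).trans (hA 0 ⟨le_rfl, hT.le⟩)
  set C := Real.exp ((Lh * A + 1) * T)
  have hC : 0 < C := Real.exp_pos _
  rw [Metric.tendstoUniformlyOn_iff]
  intro η hη
  filter_upwards [hmesh.eventually_abs_sub_le hP hΘ (η := η / (2 * C)) (by positivity)]
    with n hn s hs
  have hsampled : ∀ r ∈ Icc 0 T, |(sampledPath (t n) (m n) Θ r - sampledPath (t n) (m n) Θ 0) -
      (Θ r - Θ 0)| ≤ η / (2 * C) := fun r hr => by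
    have h0 := (hP n).sampledPath_apply Θ (Nat.zero_le _)
    rw [(hP n).zero] at h0
    rw [h0, sub_sub_sub_cancel_right]
    exact (hP n).abs_sampledPath_sub_le (by positivity) hn hr
  have hexp : Real.exp ((Lh * A + 1) * s) ≤ C :=
    Real.exp_le_exp.2 (mul_le_mul_of_nonneg_left hs.2 (by positivity))
  rw [dist_comm, Real.dist_eq]
  calc |Yn n s - Y s| ≤ η / (2 * C) * Real.exp ((Lh * A + 1) * s) :=
        (hYn n).abs_sub_le hT hh hα hA hY hsampled s hs
    _ ≤ η / (2 * C) * C := by gcongr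
    _ = η / 2 := by field_simp
    _ < η := half_lt_self hη

theorem eventually_abs_leftVal_sub_le (hh : Continuous h) (hα : ContinuousOn α (Icc 0 T))
    (hΘ : ContinuousOn Θ (Icc 0 T)) (hP : ∀ n, IsPartition (t n) (m n) 0 T)
    (hmesh : MeshTendstoZero t m)
    (hYn : ∀ n, ImpactSol T h α y₀ (sampledPath (t n) (m n) Θ) (Yn n))
    (hconv : TendstoUniformlyOn Yn Y atTop (Icc 0 T)) :
    ∀ η > 0, ∀ᶠ n in atTop, ∀ k < m n, |leftVal (Yn n) (t n (k + 1)) - Y (t n (k + 1))| ≤ η := by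
  intro η hη
  filter_upwards [Metric.tendstoUniformlyOn_iff.1 hconv (η / 2) (half_pos hη),
    hmesh.eventually_abs_sub_le hP hΘ (half_pos hη)] with n hunif hosc k hk
  have htk : t n (k + 1) ∈ Ioc 0 T :=
    ⟨(hP n).zero ▸ ((hP n).le_of_le (Nat.zero_le k) hk.le).trans_lt ((hP n).lt_succ k hk),
      ((hP n).mem_Icc hk).2⟩
  rw [(hYn n).leftVal_eq hh hα htk ((hP n).tendsto_sampledPath_nhdsLT Θ hk),
    (hP n).sampledPath_apply Θ hk]
  have h₁ := hunif _ (Ioc_subset_Icc_self htk)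
  have h₂ := hosc k hk _ ⟨((hP n).lt_succ k hk).le, le_rfl⟩
  rw [Real.dist_eq, abs_sub_comm] at h₁
  rw [abs_le] at h₂ ⊢
  rw [abs_lt] at h₁
  constructor <;> linarith

end ImpactSol

theorem simple_strategy_proceeds_converge_general
    (T : ℝ) (hT : 0 < T) (h α : ℝ → ℝ) (Lh : NNReal)
    (hh : LipschitzWith Lh h) (hα : ContinuousOn α (Set.Icc 0 T))
    (y₀ c : ℝ)
    (Sbar : ℝ → ℝ) (hS : Cadlag T Sbar)
    (g : ℝ → ℝ → ℝ) (hg : Continuous fun pt : ℝ × ℝ => g pt.1 pt.2)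
    (p q : StieltjesFunction ℝ) (hp : Continuous (p : ℝ → ℝ)) (hq : Continuous (q : ℝ → ℝ))
    (Θ : ℝ → ℝ) (hΘdef : ∀ s, Θ s = p s - q s)
    (Y : ℝ → ℝ) (hY : ImpactSol T h α y₀ Θ Y)
    (m : ℕ → ℕ)
    (t : ℕ → ℕ → ℝ)
    (ht0 : ∀ n, t n 0 = 0) (htT : ∀ n, t n (m n) = T)
    (htmono : ∀ n, ∀ k < m n, t n k < t n (k + 1))
    (hmesh : ∀ ε > (0:ℝ), ∃ N : ℕ, ∀ n ≥ N, ∀ k < m n, t n (k + 1) - t n k ≤ ε)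
    (Θn : ℕ → ℝ → ℝ)
    (hΘn : ∀ n s, Θn n s = Θ 0 + ∑ k ∈ Finset.range (m n),
      (Θ (t n (k + 1)) - Θ (t n k)) * (if t n (k + 1) ≤ s then 1 else 0))
    (Yn : ℕ → ℝ → ℝ) (hYn : ∀ n, ImpactSol T h α y₀ (Θn n) (Yn n))
    (ξ : ℕ → ℕ → ℝ)
    (hξ : ∀ n, ∀ k < m n, ξ n (k + 1) ∈ Set.uIcc
      (g (Sbar (t n (k + 1))) (leftVal (Yn n) (t n (k + 1))))
      (g (Sbar (t n (k + 1)))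
        (leftVal (Yn n) (t n (k + 1)) + c * (Θ (t n (k + 1)) - Θ (t n k))))) :
    ∀ ε > (0:ℝ), ∃ N : ℕ, ∀ n ≥ N, ∀ u ∈ Set.Icc (0:ℝ) T,
      |(∑ k ∈ Finset.range (m n),
          (if t n (k + 1) ≤ u then ξ n (k + 1) * (Θ (t n (k + 1)) - Θ (t n k)) else 0))
        - ((∫ s in Set.Ioc (0:ℝ) u, g (Sbar s) (Y s) ∂p.measure)
          - ∫ s in Set.Ioc (0:ℝ) u, g (Sbar s) (Y s) ∂q.measure)| ≤ ε := by
  intro ε hε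
  have hP : ∀ n, IsPartition (t n) (m n) 0 T := fun n => ⟨ht0 n, htT n, htmono n⟩
  have hΘ : ContinuousOn Θ (Icc 0 T) := by
    rw [funext hΘdef]
    exact (hp.sub hq).continuousOn
  have hYn' : ∀ n, ImpactSol T h α y₀ (sampledPath (t n) (m n) Θ) (Yn n) := fun n => by
    convert hYn n using 1
    ext s
    rw [hΘn, sampledPath, ht0]
  have hYc := hY.continuousOn hT hh.continuous hα hΘ
  have hyl := ImpactSol.eventually_abs_leftVal_sub_le hh.continuous hα hΘ hP hmesh hYn'
    (ImpactSol.tendstoUniformlyOn_of_sampledPath hT hh hα hΘ hP hmesh hY hYn')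
  have hjump := MeshTendstoZero.eventually_abs_mul_sub_le hmesh hP hΘ c
  obtain ⟨M, hM, hfM, hξM⟩ := exists_bound_of_mem_uIcc (ξ := fun n k => ξ n (k + 1)) hP hg hS hYc
    hyl hjump hξ
  have hfm : ∀ μ : Measure ℝ,
      AEStronglyMeasurable (fun s => g (Sbar s) (Y s)) (μ.restrict (Ioc 0 T)) := fun μ =>
    (hg.comp_aestronglyMeasurable ((hS.aestronglyMeasurable hT μ).prodMk
      (hY.1.aestronglyMeasurable hT μ))).mono_measure
      (Measure.restrict_mono Ioc_subset_Icc_self le_rfl)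
  exact eventually_atTop.1 <| eventually_abs_riemannStieltjesSum_sub_sub_le hP hmesh p q
    hp.continuousOn hq.continuousOn hΘdef hM (hfm _) (hfm _)
    (fun s hs => hfM s (Ioc_subset_Icc_self hs)) hξM
    (fun s hs => tendsto_partitionStep_of_mem_uIcc hP hmesh hg hS hYc hyl hjump hξ hs) hε

/-- the (pathwise) proceeds of simple strategies approximating a continuous
finite-variation strategy `Θ = p − q`, computed with any execution prices `ξⁿ_k` between
the natural block-trade bounds, converge uniformly on `[0,T]` to the Riemann–Stieltjes
proceeds `∫_{(0,t]} g(S̄,Y) dμ_p − ∫_{(0,t]} g(S̄,Y) dμ_q` of the limit strategy. -/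
theorem simple_strategy_proceeds_converge
    (T : ℝ) (hT : 0 < T) (h α : ℝ → ℝ) (Lh : NNReal)
    (hh : LipschitzWith Lh h) (hα : ContinuousOn α (Set.Icc 0 T))
    (y₀ c : ℝ) (hc : 0 ≤ c)
    (Sbar : ℝ → ℝ) (hS : Cadlag T Sbar)
    (g : ℝ → ℝ → ℝ) (hg : Continuous fun pt : ℝ × ℝ => g pt.1 pt.2)
    (hgLip : ∀ K : Set ℝ, IsCompact K → ∃ LK : ℝ, 0 ≤ LK ∧
      ∀ x ∈ K, ∀ y ∈ K, ∀ z ∈ K, |g x y - g x z| ≤ LK * |y - z|)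
    (p q : StieltjesFunction ℝ) (hp : Continuous (p : ℝ → ℝ)) (hq : Continuous (q : ℝ → ℝ))
    (Θ : ℝ → ℝ) (hΘdef : ∀ s, Θ s = p s - q s)
    (Y : ℝ → ℝ) (hY : ImpactSol T h α y₀ Θ Y)
    (m : ℕ → ℕ) (hm : ∀ n, 1 ≤ m n)
    (t : ℕ → ℕ → ℝ)
    (ht0 : ∀ n, t n 0 = 0) (htT : ∀ n, t n (m n) = T)
    (htmono : ∀ n, ∀ k < m n, t n k < t n (k + 1))
    (hmesh : ∀ ε > (0:ℝ), ∃ N : ℕ, ∀ n ≥ N, ∀ k < m n, t n (k + 1) - t n k ≤ ε)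
    (Θn : ℕ → ℝ → ℝ)
    (hΘn : ∀ n s, Θn n s = Θ 0 + ∑ k ∈ Finset.range (m n),
      (Θ (t n (k + 1)) - Θ (t n k)) * (if t n (k + 1) ≤ s then 1 else 0))
    (Yn : ℕ → ℝ → ℝ) (hYn : ∀ n, ImpactSol T h α y₀ (Θn n) (Yn n))
    (ξ : ℕ → ℕ → ℝ)
    (hξ : ∀ n, ∀ k < m n, ξ n (k + 1) ∈ Set.uIcc
      (g (Sbar (t n (k + 1))) (leftVal (Yn n) (t n (k + 1))))
      (g (Sbar (t n (k + 1)))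
        (leftVal (Yn n) (t n (k + 1)) + c * (Θ (t n (k + 1)) - Θ (t n k))))) :
    ∀ ε > (0:ℝ), ∃ N : ℕ, ∀ n ≥ N, ∀ u ∈ Set.Icc (0:ℝ) T,
      |(∑ k ∈ Finset.range (m n),
          (if t n (k + 1) ≤ u then ξ n (k + 1) * (Θ (t n (k + 1)) - Θ (t n k)) else 0))
        - ((∫ s in Set.Ioc (0:ℝ) u, g (Sbar s) (Y s) ∂p.measure)
          - ∫ s in Set.Ioc (0:ℝ) u, g (Sbar s) (Y s) ∂q.measure)| ≤ ε :=
  simple_strategy_proceeds_converge_general T hT h α Lh hh hα y₀ c Sbar hS g hg p q hp hq Θ hΘdef Y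
    hY m t ht0 htT htmono hmesh Θn hΘn Yn hYn ξ hξ
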